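/- For CLL process terms: (1) if t1 and t2 are stable then t1∧t2 ⊏̃_RS t_i for i = 1, 2; (2) t1∧t2 ⊑_RS t_i for i = 1, 2; (3) if t1 ⊏̃_RS t2 and t1 ⊏̃_RS t3 then t1 ⊏̃_RS t2∧t3; (4) if t1 ⊑_RS t2 and t1 ⊑_RS t3 then t1 ⊑_RS t2∧t3. Consequently, t1 ⊑_RS t2∧t3 if and only if t1 ⊑_RS t2 and t1 ⊑_RS t3. -/
import Mathlib


namespace CLL

attribute [local instance] Classical.propDecidable

/-- CLL process terms over a set `Act` of visible actions.  The action `τ` is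
represented by `none : Option Act`, a visible action `a` by `some a`. -/
inductive Tm (Act : Type) : Type where
  | nil  : Tm Act                            -- 0
  | bot  : Tm Act                            -- ⊥
  | pre  : Option Act → Tm Act → Tm Act      -- α.t
  | ec   : Tm Act → Tm Act → Tm Act          -- t □ t
  | conj : Tm Act → Tm Act → Tm Act          -- t ∧ t
  | disj : Tm Act → Tm Act → Tm Act          -- t ∨ t
  | par  : Set Act → Tm Act → Tm Act → Tm Act -- t ∥_A t

/-- A transition model: a set of transitions `t →α t'`, of instances `t F` of the
inconsistency predicate, and of instances `t F̄_α` of the auxiliary predicates. -/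
structure Model (Act : Type) where
  Tr   : Tm Act → Option Act → Tm Act → Prop
  F    : Tm Act → Prop
  Fbar : Tm Act → Option Act → Prop

variable {Act : Type}

/-- The least transition relation of the positive TSS `Strip(P_CLL, M)`:
ground instances of transition rules of `P_CLL` whose negative premises
(checked against `M`) hold, with those negative premises removed. -/
inductive STr (M : Model Act) : Tm Act → Option Act → Tm Act → Prop where
  | pre (α : Option Act) (t : Tm Act) : STr M (Tm.pre α t) α t
  | ecL {t1 t2 y1 : Tm Act} {a : Act} :
      STr M t1 (some a) y1 → (∀ y, ¬ M.Tr t2 none y) →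
      STr M (Tm.ec t1 t2) (some a) y1
  | ecR {t1 t2 y2 : Tm Act} {a : Act} :
      (∀ y, ¬ M.Tr t1 none y) → STr M t2 (some a) y2 →
      STr M (Tm.ec t1 t2) (some a) y2
  | ecTauL {t1 t2 y1 : Tm Act} :
      STr M t1 none y1 → STr M (Tm.ec t1 t2) none (Tm.ec y1 t2)
  | ecTauR {t1 t2 y2 : Tm Act} :
      STr M t2 none y2 → STr M (Tm.ec t1 t2) none (Tm.ec t1 y2)
  | conjAct {t1 t2 y1 y2 : Tm Act} {a : Act} :
      STr M t1 (some a) y1 → STr M t2 (some a) y2 →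
      STr M (Tm.conj t1 t2) (some a) (Tm.conj y1 y2)
  | conjTauL {t1 t2 y1 : Tm Act} :
      STr M t1 none y1 → STr M (Tm.conj t1 t2) none (Tm.conj y1 t2)
  | conjTauR {t1 t2 y2 : Tm Act} :
      STr M t2 none y2 → STr M (Tm.conj t1 t2) none (Tm.conj t1 y2)
  | disjL (t1 t2 : Tm Act) : STr M (Tm.disj t1 t2) none t1
  | disjR (t1 t2 : Tm Act) : STr M (Tm.disj t1 t2) none t2
  | parTauL {A : Set Act} {t1 t2 y1 : Tm Act} :
      STr M t1 none y1 → STr M (Tm.par A t1 t2) none (Tm.par A y1 t2)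
  | parTauR {A : Set Act} {t1 t2 y2 : Tm Act} :
      STr M t2 none y2 → STr M (Tm.par A t1 t2) none (Tm.par A t1 y2)
  | parL {A : Set Act} {t1 t2 y1 : Tm Act} {a : Act} :
      STr M t1 (some a) y1 → (∀ y, ¬ M.Tr t2 none y) → a ∉ A →
      STr M (Tm.par A t1 t2) (some a) (Tm.par A y1 t2)
  | parR {A : Set Act} {t1 t2 y2 : Tm Act} {a : Act} :
      (∀ y, ¬ M.Tr t1 none y) → STr M t2 (some a) y2 → a ∉ A →
      STr M (Tm.par A t1 t2) (some a) (Tm.par A t1 y2)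
  | parSync {A : Set Act} {t1 t2 y1 y2 : Tm Act} {a : Act} :
      STr M t1 (some a) y1 → STr M t2 (some a) y2 → a ∈ A →
      STr M (Tm.par A t1 t2) (some a) (Tm.par A y1 y2)

/-- Least model of the `F̄_α` rules of `Strip(P_CLL, M)`. -/
inductive SFbar (M : Model Act) : Tm Act → Option Act → Prop where
  | intro {t1 t2 y : Tm Act} {α : Option Act} :
      STr M (Tm.conj t1 t2) α y → ¬ M.F y → SFbar M (Tm.conj t1 t2) α

/-- Least model of the `F` rules of `Strip(P_CLL, M)`. -/
inductive SF (M : Model Act) : Tm Act → Prop where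
  | bot : SF M Tm.bot
  | pre {t : Tm Act} (α : Option Act) : SF M t → SF M (Tm.pre α t)
  | disj {t1 t2 : Tm Act} : SF M t1 → SF M t2 → SF M (Tm.disj t1 t2)
  | ecL {t1 t2 : Tm Act} : SF M t1 → SF M (Tm.ec t1 t2)
  | ecR {t1 t2 : Tm Act} : SF M t2 → SF M (Tm.ec t1 t2)
  | conjL {t1 t2 : Tm Act} : SF M t1 → SF M (Tm.conj t1 t2)
  | conjR {t1 t2 : Tm Act} : SF M t2 → SF M (Tm.conj t1 t2)
  | parL {A : Set Act} {t1 t2 : Tm Act} : SF M t1 → SF M (Tm.par A t1 t2)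
  | parR {A : Set Act} {t1 t2 : Tm Act} : SF M t2 → SF M (Tm.par A t1 t2)
  | conjMisL {t1 t2 y1 : Tm Act} {a : Act} :
      STr M t1 (some a) y1 → (∀ y, ¬ M.Tr t2 (some a) y) →
      (∀ y, ¬ M.Tr (Tm.conj t1 t2) none y) → SF M (Tm.conj t1 t2)
  | conjMisR {t1 t2 y2 : Tm Act} {a : Act} :
      (∀ y, ¬ M.Tr t1 (some a) y) → STr M t2 (some a) y2 →
      (∀ y, ¬ M.Tr (Tm.conj t1 t2) none y) → SF M (Tm.conj t1 t2)
  | conjDead {t1 t2 z : Tm Act} {α : Option Act} :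
      STr M (Tm.conj t1 t2) α z → ¬ M.Fbar (Tm.conj t1 t2) α →
      SF M (Tm.conj t1 t2)

/-- `M` is a stable transition model of `P_CLL`:  `M` coincides with the least
model of the positive TSS `Strip(P_CLL, M)`. -/
def IsStable (M : Model Act) : Prop :=
  (∀ t α t', M.Tr t α t' ↔ STr M t α t') ∧
  (∀ t, M.F t ↔ SF M t) ∧
  (∀ t α, M.Fbar t α ↔ SFbar M t α)

/-- `t` is stable: it has no τ-transition. -/
def Stable (M : Model Act) (t : Tm Act) : Prop := ∀ t', ¬ M.Tr t none t'

/-- The ready set `I(t)`. -/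
def Ready (M : Model Act) (t : Tm Act) : Set (Option Act) :=
  {α | ∃ u, M.Tr t α u}

/-- One τ-step between consistent terms: `t →τ_F s`. -/
def TauF (M : Model Act) (t s : Tm Act) : Prop :=
  M.Tr t none s ∧ ¬ M.F t ∧ ¬ M.F s

/-- `t ⇒ε_F s`: a sequence of τ-transitions all whose terms (endpoints included)
are consistent. -/
def EpsF (M : Model Act) (t s : Tm Act) : Prop :=
  ¬ M.F t ∧ Relation.ReflTransGen (TauF M) t s

/-- `t ⇒ε_F| s`:  `t ⇒ε_F s` with `s` stable. -/
def EpsFS (M : Model Act) (t s : Tm Act) : Prop :=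
  EpsF M t s ∧ Stable M s

/-- `t ⇒α_F s`. -/
def WeakF (M : Model Act) (α : Option Act) (t s : Tm Act) : Prop :=
  ∃ r p, EpsF M t r ∧ M.Tr r α p ∧ EpsF M p s

/-- `t ⇒α_F| s`. -/
def WeakFS (M : Model Act) (α : Option Act) (t s : Tm Act) : Prop :=
  WeakF M α t s ∧ Stable M s

/-- `R` is a stable ready simulation relation. -/
def IsRS (M : Model Act) (R : Tm Act → Tm Act → Prop) : Prop :=
  ∀ t s, R t s →
    (Stable M t ∧ Stable M s) ∧
    (¬ M.F t → ¬ M.F s) ∧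
    (∀ (a : Act) t', WeakFS M (some a) t t' →
      ∃ s', WeakFS M (some a) s s' ∧ R t' s') ∧
    (¬ M.F t → Ready M t = Ready M s)

/-- `t ⊏̃_RS s`. -/
def RSs (M : Model Act) (t s : Tm Act) : Prop :=
  ∃ R, IsRS M R ∧ R t s

/-- `t ⊑_RS s`. -/
def RSle (M : Model Act) (t s : Tm Act) : Prop :=
  ∀ t', EpsFS M t t' → ∃ s', EpsFS M s s' ∧ RSs M t' s'

/-- `t =_RS s`. -/
def RSeq (M : Model Act) (t s : Tm Act) : Prop :=
  RSle M t s ∧ RSle M s t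

/-- The binary operators `□`, `∧` and `∥_A`. -/
def IsStaticOp (Act : Type) (op : Tm Act → Tm Act → Tm Act) : Prop :=
  op = Tm.ec ∨ op = Tm.conj ∨ ∃ A : Set Act, op = Tm.par A

/-- General external choice `□_{i<n} t_i` over a finite sequence of terms. -/
def bigEC : List (Tm Act) → Tm Act
  | [] => Tm.nil
  | t :: ts => ts.foldl Tm.ec t

/-- General disjunction `⋁_{i<n} t_i` over a finite (nonempty) sequence. -/
def bigDisj : List (Tm Act) → Tm Act
  | [] => Tm.nil
  | t :: ts => ts.foldl Tm.disj t

/-- `□_{i<n} a_i.t_i` for a sequence of prefixed terms given by pairs. -/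
def ecPre (l : List (Act × Tm Act)) : Tm Act :=
  bigEC (l.map fun p => Tm.pre (some p.1) p.2)

/-- The sequence of all `a_i.(t_i ∧ s_j)` with `a_i = b_j`. -/
noncomputable def matched (l1 l2 : List (Act × Tm Act)) : List (Act × Tm Act) :=
  ((l1.product l2).filter fun q => decide (q.1.1 = q.2.1)).map
    fun q => (q.1.1, Tm.conj q.1.2 q.2.2)

/-- The right-hand side `((□Ω1)□(□Ω2))□(□Ω3)` of the expansion law. -/
noncomputable def expRHS (A : Set Act) (l1 l2 : List (Act × Tm Act)) : Tm Act :=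
  Tm.ec
    (Tm.ec
      (bigEC ((l1.filter fun p => decide (p.1 ∉ A)).map
        fun p => Tm.pre (some p.1) (Tm.par A p.2 (ecPre l2))))
      (bigEC ((l2.filter fun q => decide (q.1 ∉ A)).map
        fun q => Tm.pre (some q.1) (Tm.par A (ecPre l1) q.2))))
    (bigEC (((l1.product l2).filter fun q => decide (q.1.1 = q.2.1 ∧ q.1.1 ∈ A)).map
      fun q => Tm.pre (some q.1.1) (Tm.par A q.1.2 q.2.2)))

/-- Basic process terms: built from `0` by prefixing, `∨`, `□` and `∥_A`. -/
inductive Basic : Tm Act → Prop where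
  | nil : Basic Tm.nil
  | pre (α : Option Act) {t : Tm Act} : Basic t → Basic (Tm.pre α t)
  | disj {t1 t2 : Tm Act} : Basic t1 → Basic t2 → Basic (Tm.disj t1 t2)
  | ec {t1 t2 : Tm Act} : Basic t1 → Basic t2 → Basic (Tm.ec t1 t2)
  | par (A : Set Act) {t1 t2 : Tm Act} :
      Basic t1 → Basic t2 → Basic (Tm.par A t1 t2)

/-- Derivability `⊢ t ≤ s` in the axiomatic system `AX_CLL`. -/
inductive Deriv : Tm Act → Tm Act → Prop where
  -- inference rules
  | refl (t : Tm Act) : Deriv t t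
  | trans {t u s : Tm Act} : Deriv t u → Deriv u s → Deriv t s
  | pre_mono (α : Option Act) {t s : Tm Act} :
      Deriv t s → Deriv (Tm.pre α t) (Tm.pre α s)
  | ec_mono {t1 s1 t2 s2 : Tm Act} :
      Deriv t1 s1 → Deriv t2 s2 → Deriv (Tm.ec t1 t2) (Tm.ec s1 s2)
  | conj_mono {t1 s1 t2 s2 : Tm Act} :
      Deriv t1 s1 → Deriv t2 s2 → Deriv (Tm.conj t1 t2) (Tm.conj s1 s2)
  | disj_mono {t1 s1 t2 s2 : Tm Act} :
      Deriv t1 s1 → Deriv t2 s2 → Deriv (Tm.disj t1 t2) (Tm.disj s1 s2)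
  | par_mono (A : Set Act) {t1 s1 t2 s2 : Tm Act} :
      Deriv t1 s1 → Deriv t2 s2 → Deriv (Tm.par A t1 t2) (Tm.par A s1 s2)
  -- EC1–EC5
  | ec_comm (x y : Tm Act) : Deriv (Tm.ec x y) (Tm.ec y x)
  | ec_assoc1 (x y z : Tm Act) : Deriv (Tm.ec (Tm.ec x y) z) (Tm.ec x (Tm.ec y z))
  | ec_assoc2 (x y z : Tm Act) : Deriv (Tm.ec x (Tm.ec y z)) (Tm.ec (Tm.ec x y) z)
  | ec_idem1 (x : Tm Act) : Deriv (Tm.ec x x) x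
  | ec_idem2 (x : Tm Act) : Deriv x (Tm.ec x x)
  | ec_nil1 (x : Tm Act) : Deriv (Tm.ec x Tm.nil) x
  | ec_nil2 (x : Tm Act) : Deriv x (Tm.ec x Tm.nil)
  | ec_bot1 (x : Tm Act) : Deriv (Tm.ec x Tm.bot) Tm.bot
  | ec_bot2 (x : Tm Act) : Deriv Tm.bot (Tm.ec x Tm.bot)
  -- DI1–DI5
  | di_comm (x y : Tm Act) : Deriv (Tm.disj x y) (Tm.disj y x)
  | di_assoc1 (x y z : Tm Act) :
      Deriv (Tm.disj x (Tm.disj y z)) (Tm.disj (Tm.disj x y) z)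
  | di_assoc2 (x y z : Tm Act) :
      Deriv (Tm.disj (Tm.disj x y) z) (Tm.disj x (Tm.disj y z))
  | di_idem1 (x : Tm Act) : Deriv (Tm.disj x x) x
  | di_idem2 (x : Tm Act) : Deriv x (Tm.disj x x)
  | di_bot1 (x : Tm Act) : Deriv (Tm.disj x Tm.bot) x
  | di_bot2 (x : Tm Act) : Deriv x (Tm.disj x Tm.bot)
  | di_le (x y : Tm Act) : Deriv x (Tm.disj x y)
  -- CO1–CO4
  | co_comm (x y : Tm Act) : Deriv (Tm.conj x y) (Tm.conj y x)
  | co_assoc1 (x y z : Tm Act) :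
      Deriv (Tm.conj (Tm.conj x y) z) (Tm.conj x (Tm.conj y z))
  | co_assoc2 (x y z : Tm Act) :
      Deriv (Tm.conj x (Tm.conj y z)) (Tm.conj (Tm.conj x y) z)
  | co_idem1 (x : Tm Act) : Deriv (Tm.conj x x) x
  | co_idem2 (x : Tm Act) : Deriv x (Tm.conj x x)
  | co_bot1 (x : Tm Act) : Deriv (Tm.conj x Tm.bot) Tm.bot
  | co_bot2 (x : Tm Act) : Deriv Tm.bot (Tm.conj x Tm.bot)
  -- DS1–DS4
  | ds1 (x y z : Tm Act) :
      Deriv (Tm.ec x (Tm.disj y z)) (Tm.disj (Tm.ec x y) (Tm.ec x z))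
  | ds2 (x y z : Tm Act) :
      Deriv (Tm.conj x (Tm.disj y z)) (Tm.disj (Tm.conj x y) (Tm.conj x z))
  | ds3 (A : Set Act) (x y z : Tm Act) :
      Deriv (Tm.par A x (Tm.disj y z)) (Tm.disj (Tm.par A x y) (Tm.par A x z))
  | ds4 (a : Act) {x y : Tm Act} : Basic x → Basic y →
      Deriv (Tm.pre (some a) (Tm.disj x y))
            (Tm.ec (Tm.pre (some a) x) (Tm.pre (some a) y))
  -- PR1, PR2
  | pr1a (a : Act) : Deriv (Tm.pre (some a) Tm.bot) Tm.bot
  | pr1b (a : Act) : Deriv Tm.bot (Tm.pre (some a) Tm.bot)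
  | pr2a (x : Tm Act) : Deriv (Tm.pre none x) x
  | pr2b (x : Tm Act) : Deriv x (Tm.pre none x)
  -- PA1, PA2
  | pa_comm (A : Set Act) (x y : Tm Act) : Deriv (Tm.par A x y) (Tm.par A y x)
  | pa_bot1 (A : Set Act) (x : Tm Act) : Deriv (Tm.par A x Tm.bot) Tm.bot
  | pa_bot2 (A : Set Act) (x : Tm Act) : Deriv Tm.bot (Tm.par A x Tm.bot)
  -- ECC1–ECC3
  | ecc1a (l1 l2 : List (Act × Tm Act)) :
      ({a | a ∈ l1.map Prod.fst} : Set Act) ≠ {a | a ∈ l2.map Prod.fst} →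
      Deriv (Tm.conj (ecPre l1) (ecPre l2)) Tm.bot
  | ecc1b (l1 l2 : List (Act × Tm Act)) :
      ({a | a ∈ l1.map Prod.fst} : Set Act) ≠ {a | a ∈ l2.map Prod.fst} →
      Deriv Tm.bot (Tm.conj (ecPre l1) (ecPre l2))
  | ecc2 (l : List (Act × Tm Act × Tm Act)) :
      Deriv (ecPre (l.map fun p => (p.1, Tm.conj p.2.1 p.2.2)))
            (Tm.conj (ecPre (l.map fun p => (p.1, p.2.1)))
                     (ecPre (l.map fun p => (p.1, p.2.2))))
  | ecc3 (l : List (Act × Tm Act × Tm Act)) :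
      (l.map Prod.fst).Nodup →
      Deriv (Tm.conj (ecPre (l.map fun p => (p.1, p.2.1)))
                     (ecPre (l.map fun p => (p.1, p.2.2))))
            (ecPre (l.map fun p => (p.1, Tm.conj p.2.1 p.2.2)))
  -- EXP1, EXP2
  | exp1 (A : Set Act) (l1 l2 : List (Act × Tm Act)) :
      (∀ p ∈ l1, Basic p.2) → (∀ q ∈ l2, Basic q.2) →
      Deriv (Tm.par A (ecPre l1) (ecPre l2)) (expRHS A l1 l2)
  | exp2 (A : Set Act) (l1 l2 : List (Act × Tm Act)) :
      (∀ p ∈ l1, Basic p.2) → (∀ q ∈ l2, Basic q.2) →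
      Deriv (expRHS A l1 l2) (Tm.par A (ecPre l1) (ecPre l2))

/-- The set `NF_B` of normal forms different from `⊥`. -/
inductive NFB : Tm Act → Prop where
  | mk (ls : List (List (Act × Tm Act))) :
      ls ≠ [] →
      (∀ l ∈ ls, (l.map Prod.fst).Nodup) →
      (∀ l ∈ ls, ∀ p ∈ l, NFB p.2) →
      NFB (bigDisj (ls.map ecPre))

/-- Normal forms. -/
def NF (t : Tm Act) : Prop := t = Tm.bot ∨ NFB t

end CLL

namespace CLL

section Aux

variable {Act : Type} {M : Model Act}

/-- Term size. -/
def tsize : Tm Act → ℕ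
  | .nil => 1
  | .bot => 1
  | .pre _ t => tsize t + 1
  | .ec a b => tsize a + tsize b + 1
  | .conj a b => tsize a + tsize b + 1
  | .disj a b => tsize a + tsize b + 1
  | .par _ a b => tsize a + tsize b + 1

lemma str_size {t α} {t' : Tm Act} (h : STr M t α t') : tsize t' < tsize t := by
  induction h <;> simp only [tsize] <;> omega

lemma trS (hM : IsStable M) {t α} {t' : Tm Act} (h : M.Tr t α t') : STr M t α t' :=
  (hM.1 t α t').mp h

lemma sTr (hM : IsStable M) {t α} {t' : Tm Act} (h : STr M t α t') : M.Tr t α t' :=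
  (hM.1 t α t').mpr h

lemma fS (hM : IsStable M) {t : Tm Act} (h : M.F t) : SF M t := (hM.2.1 t).mp h

lemma sF (hM : IsStable M) {t : Tm Act} (h : SF M t) : M.F t := (hM.2.1 t).mpr h

lemma mem_ready {t : Tm Act} {α} : α ∈ Ready M t ↔ ∃ u, M.Tr t α u := Iff.rfl

/-- No term has both a visible transition and a τ-transition. -/
lemma no_mixed (hM : IsStable M) :
    ∀ (t : Tm Act) {a : Act} {u v : Tm Act},
      STr M t (some a) u → STr M t none v → False := by
  intro t
  induction t with
  | nil => intro a u v h _; cases h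
  | bot => intro a u v h _; cases h
  | pre α s => intro a u v h h'; cases h; cases h'
  | ec t1 t2 ih1 ih2 =>
      intro a u v h h'
      cases h with
      | ecL h1 hn =>
          cases h' with
          | ecTauL h2 => exact ih1 h1 h2
          | ecTauR h2 => exact hn _ (sTr hM h2)
      | ecR hn h2 =>
          cases h' with
          | ecTauL h1 => exact hn _ (sTr hM h1)
          | ecTauR h3 => exact ih2 h2 h3
  | conj t1 t2 ih1 ih2 =>
      intro a u v h h'
      cases h with
      | conjAct h1 h2 =>
          cases h' with
          | conjTauL h3 => exact ih1 h1 h3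
          | conjTauR h3 => exact ih2 h2 h3
  | disj t1 t2 _ _ => intro a u v h _; cases h
  | par A t1 t2 ih1 ih2 =>
      intro a u v h h'
      cases h with
      | parL h1 hn _ =>
          cases h' with
          | parTauL h2 => exact ih1 h1 h2
          | parTauR h2 => exact hn _ (sTr hM h2)
      | parR hn h2 _ =>
          cases h' with
          | parTauL h1 => exact hn _ (sTr hM h1)
          | parTauR h3 => exact ih2 h2 h3
      | parSync h1 h2 _ =>
          cases h' with
          | parTauL h3 => exact ih1 h1 h3
          | parTauR h3 => exact ih2 h2 h3

lemma stable_conj (hM : IsStable M) {x y : Tm Act}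
    (hx : Stable M x) (hy : Stable M y) : Stable M (Tm.conj x y) := by
  intro w hw
  cases trS hM hw with
  | conjTauL h => exact hx _ (sTr hM h)
  | conjTauR h => exact hy _ (sTr hM h)

lemma stable_conj_left (hM : IsStable M) {x y : Tm Act}
    (h : Stable M (Tm.conj x y)) : Stable M x :=
  fun w hw => h _ (sTr hM (STr.conjTauL (trS hM hw)))

lemma stable_conj_right (hM : IsStable M) {x y : Tm Act}
    (h : Stable M (Tm.conj x y)) : Stable M y :=
  fun w hw => h _ (sTr hM (STr.conjTauR (trS hM hw)))

lemma nF_left (hM : IsStable M) {x y : Tm Act} (h : ¬ M.F (Tm.conj x y)) : ¬ M.F x :=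
  fun hx => h (sF hM (SF.conjL (fS hM hx)))

lemma nF_right (hM : IsStable M) {x y : Tm Act} (h : ¬ M.F (Tm.conj x y)) : ¬ M.F y :=
  fun hx => h (sF hM (SF.conjR (fS hM hx)))

lemma nF_pre (hM : IsStable M) {α} {t : Tm Act} (h : ¬ M.F (Tm.pre α t)) : ¬ M.F t :=
  fun ht => h (sF hM (SF.pre α (fS hM ht)))

lemma F_ec_inv (hM : IsStable M) {x y : Tm Act} (h : M.F (Tm.ec x y)) :
    M.F x ∨ M.F y := by
  cases fS hM h with
  | ecL h' => exact .inl (sF hM h')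
  | ecR h' => exact .inr (sF hM h')

lemma F_par_inv (hM : IsStable M) {A} {x y : Tm Act} (h : M.F (Tm.par A x y)) :
    M.F x ∨ M.F y := by
  cases fS hM h with
  | parL h' => exact .inl (sF hM h')
  | parR h' => exact .inr (sF hM h')

lemma epsF_last {t s : Tm Act} (h : EpsF M t s) : ¬ M.F s := by
  obtain ⟨h1, h2⟩ := h
  induction h2 with
  | refl => exact h1
  | tail _ hstep _ => exact hstep.2.2

lemma stable_rtg {t s : Tm Act} (hst : Stable M t)
    (h : Relation.ReflTransGen (TauF M) t s) : s = t := by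
  rcases Relation.ReflTransGen.cases_head h with h | ⟨c, hc, _⟩
  · exact h.symm
  · exact absurd hc.1 (hst c)

/-- Decomposition of a consistent τ-path from a conjunction. -/
lemma conj_path (hM : IsStable M) :
    ∀ {u w : Tm Act}, Relation.ReflTransGen (TauF M) u w →
    ∀ x y, u = Tm.conj x y →
    ∃ x' y', w = Tm.conj x' y' ∧ Relation.ReflTransGen (TauF M) x x' ∧
      Relation.ReflTransGen (TauF M) y y' := by
  intro u w h
  induction h using Relation.ReflTransGen.head_induction_on with
  | refl => exact fun x y hu => ⟨x, y, hu, .refl, .refl⟩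
  | head hstep hrest ih =>
      intro x y hu
      subst hu
      obtain ⟨htr, hF1, hF2⟩ := hstep
      cases trS hM htr with
      | conjTauL h1 =>
          obtain ⟨x', y', hw, p1, p2⟩ := ih _ _ rfl
          exact ⟨x', y', hw,
            .head ⟨sTr hM h1, nF_left hM hF1, nF_left hM hF2⟩ p1, p2⟩
      | conjTauR h1 =>
          obtain ⟨x', y', hw, p1, p2⟩ := ih _ _ rfl
          exact ⟨x', y', hw, p1,
            .head ⟨sTr hM h1, nF_right hM hF1, nF_right hM hF2⟩ p2⟩

end Aux

end CLL

namespace CLL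

section Aux2

variable {Act : Type} {M : Model Act}

/-- A consistent unstable term has a consistent τ-derivative. -/
lemma consistent_tau (hM : IsStable M) :
    ∀ t : Tm Act, ¬ M.F t → ∀ u, M.Tr t none u →
      ∃ v, M.Tr t none v ∧ ¬ M.F v := by
  intro t
  induction t with
  | nil => intro _ u hu; cases trS hM hu
  | bot => intro h; exact absurd (sF hM SF.bot) h
  | pre α s _ =>
      intro h u hu
      cases trS hM hu
      exact ⟨s, hu, nF_pre hM h⟩
  | ec t1 t2 ih1 ih2 =>
      intro h u hu
      have h1 : ¬ M.F t1 := fun hx => h (sF hM (SF.ecL (fS hM hx)))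
      have h2 : ¬ M.F t2 := fun hx => h (sF hM (SF.ecR (fS hM hx)))
      cases trS hM hu with
      | ecTauL hs =>
          obtain ⟨v, hv, hFv⟩ := ih1 h1 _ (sTr hM hs)
          exact ⟨Tm.ec v t2, sTr hM (STr.ecTauL (trS hM hv)),
            fun hc => (F_ec_inv hM hc).elim hFv h2⟩
      | ecTauR hs =>
          obtain ⟨v, hv, hFv⟩ := ih2 h2 _ (sTr hM hs)
          exact ⟨Tm.ec t1 v, sTr hM (STr.ecTauR (trS hM hv)),
            fun hc => (F_ec_inv hM hc).elim h1 hFv⟩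
  | conj t1 t2 _ _ =>
      intro h u hu
      by_contra hno
      push_neg at hno
      refine h (sF hM (SF.conjDead (trS hM hu) (fun hfb => ?_)))
      cases (hM.2.2 _ _).mp hfb with
      | intro hstep hFy => exact hFy (hno _ (sTr hM hstep))
  | disj t1 t2 _ _ =>
      intro h u _
      by_cases h1 : M.F t1
      · have h2 : ¬ M.F t2 := fun h2 => h (sF hM (SF.disj (fS hM h1) (fS hM h2)))
        exact ⟨t2, sTr hM (STr.disjR t1 t2), h2⟩
      · exact ⟨t1, sTr hM (STr.disjL t1 t2), h1⟩
  | par A t1 t2 ih1 ih2 =>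
      intro h u hu
      have h1 : ¬ M.F t1 := fun hx => h (sF hM (SF.parL (fS hM hx)))
      have h2 : ¬ M.F t2 := fun hx => h (sF hM (SF.parR (fS hM hx)))
      cases trS hM hu with
      | parTauL hs =>
          obtain ⟨v, hv, hFv⟩ := ih1 h1 _ (sTr hM hs)
          exact ⟨Tm.par A v t2, sTr hM (STr.parTauL (trS hM hv)),
            fun hc => (F_par_inv hM hc).elim hFv h2⟩
      | parTauR hs =>
          obtain ⟨v, hv, hFv⟩ := ih2 h2 _ (sTr hM hs)
          exact ⟨Tm.par A t1 v, sTr hM (STr.parTauR (trS hM hv)),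
            fun hc => (F_par_inv hM hc).elim h1 hFv⟩

/-- Every consistent term reaches a stable consistent term by consistent τ-steps. -/
lemma reach_stable (hM : IsStable M) (t : Tm Act) (h : ¬ M.F t) :
    ∃ t', EpsFS M t t' := by
  have key : ∀ n, ∀ t : Tm Act, tsize t ≤ n → ¬ M.F t → ∃ t', EpsFS M t t' := by
    intro n
    induction n with
    | zero => intro t hle _; cases t <;> simp [tsize] at hle
    | succ n ih =>
        intro t hle h
        by_cases hst : Stable M t
        · exact ⟨t, ⟨h, .refl⟩, hst⟩
        · simp only [Stable, not_forall, not_not] at hst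
          obtain ⟨u, hu⟩ := hst
          obtain ⟨v, hv, hFv⟩ := consistent_tau hM t h u hu
          have hsz : tsize v ≤ n := by
            have := str_size (trS hM hv); omega
          obtain ⟨t', ⟨hF', hp'⟩, hst'⟩ := ih v hsz hFv
          exact ⟨t', ⟨h, .head ⟨hv, h, hFv⟩ hp'⟩, hst'⟩
  exact key (tsize t) t le_rfl h

/-- A stable consistent term with an `a`-transition has a consistent `a`-derivative. -/
lemma consistent_deriv (hM : IsStable M) :
    ∀ t : Tm Act, Stable M t → ¬ M.F t → ∀ (a : Act) (p : Tm Act),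
      M.Tr t (some a) p → ∃ q, M.Tr t (some a) q ∧ ¬ M.F q := by
  intro t
  induction t with
  | nil => intro _ _ a p hp; cases trS hM hp
  | bot => intro _ h; exact absurd (sF hM SF.bot) h
  | pre α s _ =>
      intro _ h a p hp
      cases trS hM hp
      exact ⟨s, hp, nF_pre hM h⟩
  | ec t1 t2 ih1 ih2 =>
      intro hst h a p hp
      have hst1 : Stable M t1 := fun w hw => hst _ (sTr hM (STr.ecTauL (trS hM hw)))
      have hst2 : Stable M t2 := fun w hw => hst _ (sTr hM (STr.ecTauR (trS hM hw)))
      have h1 : ¬ M.F t1 := fun hx => h (sF hM (SF.ecL (fS hM hx)))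
      have h2 : ¬ M.F t2 := fun hx => h (sF hM (SF.ecR (fS hM hx)))
      cases trS hM hp with
      | ecL hq hn =>
          obtain ⟨q, hq', hFq⟩ := ih1 hst1 h1 a _ (sTr hM hq)
          exact ⟨q, sTr hM (STr.ecL (trS hM hq') hn), hFq⟩
      | ecR hn hq =>
          obtain ⟨q, hq', hFq⟩ := ih2 hst2 h2 a _ (sTr hM hq)
          exact ⟨q, sTr hM (STr.ecR hn (trS hM hq')), hFq⟩
  | conj t1 t2 _ _ =>
      intro _ h a p hp
      by_contra hno
      push_neg at hno
      refine h (sF hM (SF.conjDead (trS hM hp) (fun hfb => ?_)))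
      cases (hM.2.2 _ _).mp hfb with
      | intro hstep hFy => exact hFy (hno _ (sTr hM hstep))
  | disj t1 t2 _ _ =>
      intro hst _ a p _
      exact absurd (sTr hM (STr.disjL t1 t2)) (hst t1)
  | par A t1 t2 ih1 ih2 =>
      intro hst h a p hp
      have hst1 : Stable M t1 := fun w hw => hst _ (sTr hM (STr.parTauL (trS hM hw)))
      have hst2 : Stable M t2 := fun w hw => hst _ (sTr hM (STr.parTauR (trS hM hw)))
      have h1 : ¬ M.F t1 := fun hx => h (sF hM (SF.parL (fS hM hx)))
      have h2 : ¬ M.F t2 := fun hx => h (sF hM (SF.parR (fS hM hx)))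
      cases trS hM hp with
      | parL hq hn ha =>
          obtain ⟨q, hq', hFq⟩ := ih1 hst1 h1 a _ (sTr hM hq)
          exact ⟨Tm.par A q t2, sTr hM (STr.parL (trS hM hq') hn ha),
            fun hc => (F_par_inv hM hc).elim hFq h2⟩
      | parR hn hq ha =>
          obtain ⟨q, hq', hFq⟩ := ih2 hst2 h2 a _ (sTr hM hq)
          exact ⟨Tm.par A t1 q, sTr hM (STr.parR hn (trS hM hq') ha),
            fun hc => (F_par_inv hM hc).elim h1 hFq⟩
      | parSync hq1 hq2 ha =>
          obtain ⟨q1, hq1', hFq1⟩ := ih1 hst1 h1 a _ (sTr hM hq1)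
          obtain ⟨q2, hq2', hFq2⟩ := ih2 hst2 h2 a _ (sTr hM hq2)
          exact ⟨Tm.par A q1 q2, sTr hM (STr.parSync (trS hM hq1') (trS hM hq2') ha),
            fun hc => (F_par_inv hM hc).elim hFq1 hFq2⟩

lemma RSs_stable_left {t s : Tm Act} (h : RSs M t s) : Stable M t := by
  obtain ⟨R, hR, hm⟩ := h; exact (hR t s hm).1.1

lemma RSs_stable_right {t s : Tm Act} (h : RSs M t s) : Stable M s := by
  obtain ⟨R, hR, hm⟩ := h; exact (hR t s hm).1.2

lemma RSs_consistent {t s : Tm Act} (h : RSs M t s) (ht : ¬ M.F t) : ¬ M.F s := by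
  obtain ⟨R, hR, hm⟩ := h; exact (hR t s hm).2.1 ht

lemma RSs_ready {t s : Tm Act} (h : RSs M t s) (ht : ¬ M.F t) :
    Ready M t = Ready M s := by
  obtain ⟨R, hR, hm⟩ := h; exact (hR t s hm).2.2.2 ht

lemma RSs_weak {t s t' : Tm Act} {a : Act} (h : RSs M t s)
    (hw : WeakFS M (some a) t t') :
    ∃ s', WeakFS M (some a) s s' ∧ RSs M t' s' := by
  obtain ⟨R, hR, hm⟩ := h
  obtain ⟨s', hw', hm'⟩ := (hR t s hm).2.2.1 a t' hw
  exact ⟨s', hw', R, hR, hm'⟩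

lemma RSs_trans {t u s : Tm Act} (h1 : RSs M t u) (h2 : RSs M u s) : RSs M t s := by
  obtain ⟨R1, hR1, m1⟩ := h1
  obtain ⟨R2, hR2, m2⟩ := h2
  refine ⟨fun a c => ∃ b, R1 a b ∧ R2 b c, ?_, u, m1, m2⟩
  rintro a c ⟨b, hab, hbc⟩
  obtain ⟨⟨sa, _⟩, fab, wab, rab⟩ := hR1 a b hab
  obtain ⟨⟨_, sc⟩, fbc, wbc, rbc⟩ := hR2 b c hbc
  refine ⟨⟨sa, sc⟩, fun h => fbc (fab h), ?_, fun h => (rab h).trans (rbc (fab h))⟩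
  intro d t' hw
  obtain ⟨b', hwb, hb'⟩ := wab d t' hw
  obtain ⟨c', hwc, hc'⟩ := wbc d b' hwb
  exact ⟨c', hwc, b', hb', hc'⟩

end Aux2

end CLL

namespace CLL

section Aux3

variable {Act : Type} {M : Model Act}

lemma main_aux (hM : IsStable M) :
    ∀ n, ∀ x y x' y' t' : Tm Act, tsize (Tm.conj x y) ≤ n →
      EpsFS M x x' → EpsFS M y y' → Stable M t' → ¬ M.F t' →
      RSs M t' x' → RSs M t' y' → ¬ M.F (Tm.conj x y) := by
  intro n
  induction n with
  | zero =>
      intro x y _ _ _ hle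
      simp only [tsize] at hle; omega
  | succ n ih =>
      intro x y x' y' t' hle hx hy hst' hFt' hrx hry hF
      have hsx' : Stable M x' := hx.2
      have hsy' : Stable M y' := hy.2
      obtain ⟨⟨hFx, hpx⟩, _⟩ := hx
      obtain ⟨⟨hFy, hpy⟩, _⟩ := hy
      cases fS hM hF with
      | conjL h => exact hFx (sF hM h)
      | conjR h => exact hFy (sF hM h)
      | conjMisL h1 hna hnt =>
          rename_i y1 a
          have hsx : Stable M x := fun w hw => hnt _ (sTr hM (STr.conjTauL (trS hM hw)))
          have hsy : Stable M y := fun w hw => hnt _ (sTr hM (STr.conjTauR (trS hM hw)))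
          have ex : x' = x := stable_rtg hsx hpx
          have ey : y' = y := stable_rtg hsy hpy
          subst ex; subst ey
          have e1 : Ready M t' = Ready M x' := RSs_ready hrx hFt'
          have e2 : Ready M t' = Ready M y' := RSs_ready hry hFt'
          have hmem : (some a) ∈ Ready M y' := by
            rw [← e2, e1]; exact ⟨y1, sTr hM h1⟩
          obtain ⟨w, hw⟩ := hmem
          exact hna w hw
      | conjMisR hna h1 hnt =>
          rename_i y1 a
          have hsx : Stable M x := fun w hw => hnt _ (sTr hM (STr.conjTauL (trS hM hw)))
          have hsy : Stable M y := fun w hw => hnt _ (sTr hM (STr.conjTauR (trS hM hw)))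
          have ex : x' = x := stable_rtg hsx hpx
          have ey : y' = y := stable_rtg hsy hpy
          subst ex; subst ey
          have e1 : Ready M t' = Ready M x' := RSs_ready hrx hFt'
          have e2 : Ready M t' = Ready M y' := RSs_ready hry hFt'
          have hmem : (some a) ∈ Ready M x' := by
            rw [← e1, e2]; exact ⟨y1, sTr hM h1⟩
          obtain ⟨w, hw⟩ := hmem
          exact hna w hw
      | conjDead hz hnb =>
          rename_i z α
          refine hnb ((hM.2.2 _ _).mpr ?_)
          by_cases hsx : Stable M x
          · by_cases hsy : Stable M y
            · -- both components stable
              have ex : x' = x := stable_rtg hsx hpx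
              have ey : y' = y := stable_rtg hsy hpy
              subst ex; subst ey
              cases hz with
              | conjTauL h1 => exact absurd (sTr hM h1) (hsx _)
              | conjTauR h1 => exact absurd (sTr hM h1) (hsy _)
              | conjAct h1 h2 =>
                  rename_i y1 y2 a
                  have e1 : Ready M t' = Ready M x' := RSs_ready hrx hFt'
                  have hmem : (some a) ∈ Ready M t' := by
                    rw [e1]; exact ⟨y1, sTr hM h1⟩
                  obtain ⟨p0, hp0⟩ := hmem
                  obtain ⟨q0, hq0, hFq0⟩ := consistent_deriv hM t' hst' hFt' a p0 hp0
                  obtain ⟨t'', ht''⟩ := reach_stable hM q0 hFq0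
                  have hwt : WeakFS M (some a) t' t'' :=
                    ⟨⟨t', q0, ⟨hFt', .refl⟩, hq0, ht''.1⟩, ht''.2⟩
                  have hFt'' : ¬ M.F t'' := epsF_last ht''.1
                  obtain ⟨x2, hwx, hr1'⟩ := RSs_weak hrx hwt
                  obtain ⟨y2', hwy, hr2'⟩ := RSs_weak hry hwt
                  obtain ⟨⟨r2, p2, f1, ht2, f2⟩, hsx2⟩ := hwx
                  have er2 : r2 = x' := stable_rtg hsx f1.2
                  subst er2
                  obtain ⟨⟨r3, p3, g1, ht3, g2⟩, hsy2⟩ := hwy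
                  have er3 : r3 = y' := stable_rtg hsy g1.2
                  subst er3
                  refine SFbar.intro (STr.conjAct (trS hM ht2) (trS hM ht3)) ?_
                  have hsz : tsize (Tm.conj p2 p3) ≤ n := by
                    have s1 := str_size (trS hM ht2)
                    have s2 := str_size (trS hM ht3)
                    simp only [tsize] at hle ⊢
                    omega
                  exact ih p2 p3 x2 y2' t'' hsz ⟨f2, hsx2⟩ ⟨g2, hsy2⟩ ht''.2 hFt'' hr1' hr2'
            · -- y unstable
              rcases Relation.ReflTransGen.cases_head hpy with heq | ⟨c, hc, hrest⟩
              · subst heq; exact absurd hsy' hsy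
              · have hα : α = none := by
                  cases hz with
                  | conjAct h1 h2 => exact (no_mixed hM y h2 (trS hM hc.1)).elim
                  | conjTauL _ => rfl
                  | conjTauR _ => rfl
                subst hα
                refine SFbar.intro (STr.conjTauR (trS hM hc.1)) ?_
                have hsz : tsize (Tm.conj x c) ≤ n := by
                  have s1 := str_size (trS hM hc.1)
                  simp only [tsize] at hle ⊢
                  omega
                exact ih x c x' y' t' hsz ⟨⟨hFx, hpx⟩, hsx'⟩ ⟨⟨hc.2.2, hrest⟩, hsy'⟩
                  hst' hFt' hrx hry
          · -- x unstable
            rcases Relation.ReflTransGen.cases_head hpx with heq | ⟨c, hc, hrest⟩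
            · subst heq; exact absurd hsx' hsx
            · have hα : α = none := by
                cases hz with
                | conjAct h1 h2 => exact (no_mixed hM x h1 (trS hM hc.1)).elim
                | conjTauL _ => rfl
                | conjTauR _ => rfl
              subst hα
              refine SFbar.intro (STr.conjTauL (trS hM hc.1)) ?_
              have hsz : tsize (Tm.conj c y) ≤ n := by
                have s1 := str_size (trS hM hc.1)
                simp only [tsize] at hle ⊢
                omega
              exact ih c y x' y' t' hsz ⟨⟨hc.2.2, hrest⟩, hsx'⟩ ⟨⟨hFy, hpy⟩, hsy'⟩
                hst' hFt' hrx hry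

lemma main_consistent (hM : IsStable M) {x y x' y' t' : Tm Act}
    (hx : EpsFS M x x') (hy : EpsFS M y y') (hst' : Stable M t') (hFt' : ¬ M.F t')
    (hrx : RSs M t' x') (hry : RSs M t' y') : ¬ M.F (Tm.conj x y) :=
  main_aux hM (tsize (Tm.conj x y)) x y x' y' t' le_rfl hx hy hst' hFt' hrx hry

end Aux3

end CLL

namespace CLL

section Aux4

variable {Act : Type} {M : Model Act}

lemma lift_path2 (hM : IsStable M) :
    ∀ {y y' : Tm Act}, Relation.ReflTransGen (TauF M) y y' →
    ∀ x' t' : Tm Act, Stable M x' → Stable M y' → ¬ M.F y → Stable M t' → ¬ M.F t' →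
      RSs M t' x' → RSs M t' y' →
      Relation.ReflTransGen (TauF M) (Tm.conj x' y) (Tm.conj x' y') := by
  intro y y' h
  induction h using Relation.ReflTransGen.head_induction_on with
  | refl => intro x' t' _ _ _ _ _ _ _; exact .refl
  | @head b c hstep hrest ih =>
      intro x' t' hsx' hsy' hFb hst' hFt' hrx hry
      have hFx' : ¬ M.F x' := RSs_consistent hrx hFt'
      have h1 : ¬ M.F (Tm.conj x' b) :=
        main_consistent hM ⟨⟨hFx', .refl⟩, hsx'⟩ ⟨⟨hFb, .head hstep hrest⟩, hsy'⟩
          hst' hFt' hrx hry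
      have h2 : ¬ M.F (Tm.conj x' c) :=
        main_consistent hM ⟨⟨hFx', .refl⟩, hsx'⟩ ⟨⟨hstep.2.2, hrest⟩, hsy'⟩
          hst' hFt' hrx hry
      exact .head ⟨sTr hM (STr.conjTauR (trS hM hstep.1)), h1, h2⟩
        (ih x' t' hsx' hsy' hstep.2.2 hst' hFt' hrx hry)

lemma lift_path1 (hM : IsStable M) :
    ∀ {x x' : Tm Act}, Relation.ReflTransGen (TauF M) x x' →
    ∀ y y' t' : Tm Act, ¬ M.F x → Stable M x' → EpsFS M y y' → Stable M t' → ¬ M.F t' →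
      RSs M t' x' → RSs M t' y' →
      Relation.ReflTransGen (TauF M) (Tm.conj x y) (Tm.conj x' y') := by
  intro x x' h
  induction h using Relation.ReflTransGen.head_induction_on with
  | refl =>
      intro y y' t' _ hsx' hy hst' hFt' hrx hry
      exact lift_path2 hM hy.1.2 _ t' hsx' hy.2 hy.1.1 hst' hFt' hrx hry
  | @head b c hstep hrest ih =>
      intro y y' t' hFb hsx' hy hst' hFt' hrx hry
      have h1 : ¬ M.F (Tm.conj b y) :=
        main_consistent hM ⟨⟨hFb, .head hstep hrest⟩, hsx'⟩ hy hst' hFt' hrx hry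
      have h2 : ¬ M.F (Tm.conj c y) :=
        main_consistent hM ⟨⟨hstep.2.2, hrest⟩, hsx'⟩ hy hst' hFt' hrx hry
      exact .head ⟨sTr hM (STr.conjTauL (trS hM hstep.1)), h1, h2⟩
        (ih y y' t' hstep.2.2 hsx' hy hst' hFt' hrx hry)

lemma lift (hM : IsStable M) {x y x' y' t' : Tm Act}
    (hx : EpsFS M x x') (hy : EpsFS M y y') (hst' : Stable M t') (hFt' : ¬ M.F t')
    (hrx : RSs M t' x') (hry : RSs M t' y') :
    EpsFS M (Tm.conj x y) (Tm.conj x' y') :=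
  ⟨⟨main_consistent hM hx hy hst' hFt' hrx hry,
    lift_path1 hM hx.1.2 y y' t' hx.1.1 hx.2 hy hst' hFt' hrx hry⟩,
   stable_conj hM hx.2 hy.2⟩

/-- Part (1), left projection. -/
lemma conj_le_left (hM : IsStable M) {t1 t2 : Tm Act}
    (h1 : Stable M t1) (h2 : Stable M t2) : RSs M (Tm.conj t1 t2) t1 := by
  refine ⟨fun u s => ∃ v, u = Tm.conj s v ∧ Stable M s ∧ Stable M v, ?_,
    ⟨t2, rfl, h1, h2⟩⟩
  rintro u s ⟨v, rfl, hs, hv⟩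
  refine ⟨⟨stable_conj hM hs hv, hs⟩, fun h => nF_left hM h, ?_, ?_⟩
  · intro a t' hw
    obtain ⟨⟨r, p, e1, htr, e2⟩, hstq⟩ := hw
    have hr : r = Tm.conj s v := stable_rtg (stable_conj hM hs hv) e1.2
    subst hr
    cases trS hM htr with
    | conjAct hp1 hp2 =>
        rename_i p1 p2
        obtain ⟨q1, q2, rfl, pp1, pp2⟩ := conj_path hM e2.2 p1 p2 rfl
        have hq1 : Stable M q1 := stable_conj_left hM hstq
        have hq2 : Stable M q2 := stable_conj_right hM hstq
        exact ⟨q1, ⟨⟨s, p1, ⟨nF_left hM e1.1, .refl⟩, sTr hM hp1,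
          ⟨nF_left hM e2.1, pp1⟩⟩, hq1⟩, q2, rfl, hq1, hq2⟩
  · intro hF
    ext α
    simp only [mem_ready]
    constructor
    · rintro ⟨u, hu⟩
      cases trS hM hu with
      | conjAct hp1 _ => exact ⟨_, sTr hM hp1⟩
      | conjTauL hp => exact absurd (sTr hM hp) (hs _)
      | conjTauR hp => exact absurd (sTr hM hp) (hv _)
    · rintro ⟨u, hu⟩
      match α, hu with
      | none, hu => exact absurd hu (hs u)
      | some a, hu =>
          by_cases hex : ∃ w, M.Tr v (some a) w
          · obtain ⟨w, hw⟩ := hex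
            exact ⟨_, sTr hM (STr.conjAct (trS hM hu) (trS hM hw))⟩
          · push_neg at hex
            exact absurd (sF hM (SF.conjMisL (trS hM hu) (fun w hw => hex w hw)
              (stable_conj hM hs hv))) hF

/-- Part (1), right projection. -/
lemma conj_le_right (hM : IsStable M) {t1 t2 : Tm Act}
    (h1 : Stable M t1) (h2 : Stable M t2) : RSs M (Tm.conj t1 t2) t2 := by
  refine ⟨fun u s => ∃ v, u = Tm.conj v s ∧ Stable M v ∧ Stable M s, ?_,
    ⟨t1, rfl, h1, h2⟩⟩
  rintro u s ⟨v, rfl, hv, hs⟩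
  refine ⟨⟨stable_conj hM hv hs, hs⟩, fun h => nF_right hM h, ?_, ?_⟩
  · intro a t' hw
    obtain ⟨⟨r, p, e1, htr, e2⟩, hstq⟩ := hw
    have hr : r = Tm.conj v s := stable_rtg (stable_conj hM hv hs) e1.2
    subst hr
    cases trS hM htr with
    | conjAct hp1 hp2 =>
        rename_i p1 p2
        obtain ⟨q1, q2, rfl, pp1, pp2⟩ := conj_path hM e2.2 p1 p2 rfl
        have hq1 : Stable M q1 := stable_conj_left hM hstq
        have hq2 : Stable M q2 := stable_conj_right hM hstq
        exact ⟨q2, ⟨⟨s, p2, ⟨nF_right hM e1.1, .refl⟩, sTr hM hp2,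
          ⟨nF_right hM e2.1, pp2⟩⟩, hq2⟩, q1, rfl, hq1, hq2⟩
  · intro hF
    ext α
    simp only [mem_ready]
    constructor
    · rintro ⟨u, hu⟩
      cases trS hM hu with
      | conjAct _ hp2 => exact ⟨_, sTr hM hp2⟩
      | conjTauL hp => exact absurd (sTr hM hp) (hv _)
      | conjTauR hp => exact absurd (sTr hM hp) (hs _)
    · rintro ⟨u, hu⟩
      match α, hu with
      | none, hu => exact absurd hu (hs u)
      | some a, hu =>
          by_cases hex : ∃ w, M.Tr v (some a) w
          · obtain ⟨w, hw⟩ := hex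
            exact ⟨_, sTr hM (STr.conjAct (trS hM hw) (trS hM hu))⟩
          · push_neg at hex
            exact absurd (sF hM (SF.conjMisR (fun w hw => hex w hw) (trS hM hu)
              (stable_conj hM hv hs))) hF

/-- Part (2). -/
lemma conj_RSle_left (hM : IsStable M) (t1 t2 : Tm Act) :
    RSle M (Tm.conj t1 t2) t1 := by
  intro t' h
  obtain ⟨⟨hF, hp⟩, hst⟩ := h
  obtain ⟨u, v, rfl, p1, p2⟩ := conj_path hM hp t1 t2 rfl
  have hu : Stable M u := stable_conj_left hM hst
  have hv : Stable M v := stable_conj_right hM hst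
  exact ⟨u, ⟨⟨nF_left hM hF, p1⟩, hu⟩, conj_le_left hM hu hv⟩

lemma conj_RSle_right (hM : IsStable M) (t1 t2 : Tm Act) :
    RSle M (Tm.conj t1 t2) t2 := by
  intro t' h
  obtain ⟨⟨hF, hp⟩, hst⟩ := h
  obtain ⟨u, v, rfl, p1, p2⟩ := conj_path hM hp t1 t2 rfl
  have hu : Stable M u := stable_conj_left hM hst
  have hv : Stable M v := stable_conj_right hM hst
  exact ⟨v, ⟨⟨nF_right hM hF, p2⟩, hv⟩, conj_le_right hM hu hv⟩

/-- Part (3). -/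
lemma conj_glb (hM : IsStable M) {t t2 t3 : Tm Act}
    (h2 : RSs M t t2) (h3 : RSs M t t3) : RSs M t (Tm.conj t2 t3) := by
  refine ⟨fun a s => ∃ s2 s3, s = Tm.conj s2 s3 ∧ RSs M a s2 ∧ RSs M a s3, ?_,
    ⟨t2, t3, rfl, h2, h3⟩⟩
  rintro a s ⟨s2, s3, rfl, hr2, hr3⟩
  have hsa : Stable M a := RSs_stable_left hr2
  have hs2 : Stable M s2 := RSs_stable_right hr2
  have hs3 : Stable M s3 := RSs_stable_right hr3
  refine ⟨⟨hsa, stable_conj hM hs2 hs3⟩, ?_, ?_, ?_⟩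
  · intro hFa
    exact main_consistent hM ⟨⟨RSs_consistent hr2 hFa, .refl⟩, hs2⟩
      ⟨⟨RSs_consistent hr3 hFa, .refl⟩, hs3⟩ hsa hFa hr2 hr3
  · intro b t₀ hw
    obtain ⟨⟨r, p, e1, htr, e2⟩, hst0⟩ := hw
    have hw0 : WeakFS M (some b) a t₀ := ⟨⟨r, p, e1, htr, e2⟩, hst0⟩
    have hFa : ¬ M.F a := e1.1
    have hFt0 : ¬ M.F t₀ := epsF_last e2
    obtain ⟨x2, hwx, hr2'⟩ := RSs_weak hr2 hw0
    obtain ⟨y2, hwy, hr3'⟩ := RSs_weak hr3 hw0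
    obtain ⟨⟨r2, p2, f1, ht2, f2⟩, hsx2⟩ := hwx
    have er2 : r2 = s2 := stable_rtg hs2 f1.2
    rw [er2] at ht2
    obtain ⟨⟨r3, p3, g1, ht3, g2⟩, hsy2⟩ := hwy
    have er3 : r3 = s3 := stable_rtg hs3 g1.2
    rw [er3] at ht3
    have hFconj : ¬ M.F (Tm.conj s2 s3) :=
      main_consistent hM ⟨⟨f1.1, .refl⟩, hs2⟩ ⟨⟨g1.1, .refl⟩, hs3⟩ hsa hFa hr2 hr3
    refine ⟨Tm.conj x2 y2, ⟨⟨Tm.conj s2 s3, Tm.conj p2 p3, ⟨hFconj, .refl⟩,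
      sTr hM (STr.conjAct (trS hM ht2) (trS hM ht3)),
      (lift hM ⟨f2, hsx2⟩ ⟨g2, hsy2⟩ hst0 hFt0 hr2' hr3').1⟩,
      stable_conj hM hsx2 hsy2⟩, x2, y2, rfl, hr2', hr3'⟩
  · intro hFa
    have e2 := RSs_ready hr2 hFa
    have e3 := RSs_ready hr3 hFa
    ext α
    simp only [mem_ready]
    constructor
    · rintro ⟨u, hu⟩
      match α, hu with
      | none, hu => exact absurd hu (hsa u)
      | some b, hu =>
          have m2 : (some b) ∈ Ready M s2 := by rw [← e2]; exact ⟨u, hu⟩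
          have m3 : (some b) ∈ Ready M s3 := by rw [← e3]; exact ⟨u, hu⟩
          obtain ⟨u2, hu2⟩ := m2
          obtain ⟨u3, hu3⟩ := m3
          exact ⟨_, sTr hM (STr.conjAct (trS hM hu2) (trS hM hu3))⟩
    · rintro ⟨u, hu⟩
      cases trS hM hu with
      | conjAct hp1 _ =>
          have : _ ∈ Ready M s2 := ⟨_, sTr hM hp1⟩
          rw [← e2] at this
          exact this
      | conjTauL hp => exact absurd (sTr hM hp) (hs2 _)
      | conjTauR hp => exact absurd (sTr hM hp) (hs3 _)

/-- Part (4). -/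
lemma RSle_glb (hM : IsStable M) {t1 t2 t3 : Tm Act}
    (h2 : RSle M t1 t2) (h3 : RSle M t1 t3) : RSle M t1 (Tm.conj t2 t3) := by
  intro t' h
  obtain ⟨u2, hu2, hr2⟩ := h2 t' h
  obtain ⟨u3, hu3, hr3⟩ := h3 t' h
  have hFt' : ¬ M.F t' := epsF_last h.1
  have hst' : Stable M t' := h.2
  exact ⟨Tm.conj u2 u3, lift hM hu2 hu3 hst' hFt' hr2 hr3, conj_glb hM hr2 hr3⟩

/-- Part (5), forward direction. -/
lemma RSle_conj_inv (hM : IsStable M) {t1 t2 t3 : Tm Act}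
    (h : RSle M t1 (Tm.conj t2 t3)) : RSle M t1 t2 ∧ RSle M t1 t3 := by
  constructor <;> intro t' ht'
  · obtain ⟨w, hw, hr⟩ := h t' ht'
    obtain ⟨⟨hFw, hpw⟩, hstw⟩ := hw
    obtain ⟨u, v, rfl, p1, p2⟩ := conj_path hM hpw t2 t3 rfl
    have hu : Stable M u := stable_conj_left hM hstw
    have hv : Stable M v := stable_conj_right hM hstw
    exact ⟨u, ⟨⟨nF_left hM hFw, p1⟩, hu⟩, RSs_trans hr (conj_le_left hM hu hv)⟩
  · obtain ⟨w, hw, hr⟩ := h t' ht'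
    obtain ⟨⟨hFw, hpw⟩, hstw⟩ := hw
    obtain ⟨u, v, rfl, p1, p2⟩ := conj_path hM hpw t2 t3 rfl
    have hu : Stable M u := stable_conj_left hM hstw
    have hv : Stable M v := stable_conj_right hM hstw
    exact ⟨v, ⟨⟨nF_right hM hFw, p2⟩, hv⟩, RSs_trans hr (conj_le_right hM hu hv)⟩

end Aux4

end CLL

/-- conjunction as greatest lower bound w.r.t. ready simulation. -/
theorem stmt10 (Act : Type) (M : CLL.Model Act) (hM : CLL.IsStable M) :
    (∀ t1 t2 : CLL.Tm Act, CLL.Stable M t1 → CLL.Stable M t2 →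
      CLL.RSs M (CLL.Tm.conj t1 t2) t1 ∧ CLL.RSs M (CLL.Tm.conj t1 t2) t2) ∧
    (∀ t1 t2 : CLL.Tm Act,
      CLL.RSle M (CLL.Tm.conj t1 t2) t1 ∧ CLL.RSle M (CLL.Tm.conj t1 t2) t2) ∧
    (∀ t1 t2 t3 : CLL.Tm Act, CLL.RSs M t1 t2 → CLL.RSs M t1 t3 →
      CLL.RSs M t1 (CLL.Tm.conj t2 t3)) ∧
    (∀ t1 t2 t3 : CLL.Tm Act, CLL.RSle M t1 t2 → CLL.RSle M t1 t3 →
      CLL.RSle M t1 (CLL.Tm.conj t2 t3)) ∧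
    (∀ t1 t2 t3 : CLL.Tm Act,
      CLL.RSle M t1 (CLL.Tm.conj t2 t3) ↔ CLL.RSle M t1 t2 ∧ CLL.RSle M t1 t3) := by
  refine ⟨fun t1 t2 h1 h2 => ⟨CLL.conj_le_left hM h1 h2, CLL.conj_le_right hM h1 h2⟩,
    fun t1 t2 => ⟨CLL.conj_RSle_left hM t1 t2, CLL.conj_RSle_right hM t1 t2⟩,
    fun t1 t2 t3 => CLL.conj_glb hM,
    fun t1 t2 t3 => CLL.RSle_glb hM,
    fun t1 t2 t3 => ⟨CLL.RSle_conj_inv hM, fun h => CLL.RSle_glb hM h.1 h.2⟩⟩
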